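/- arXiv:2308.09350 — 5 statements merged into one kernel-verified Lean document; each statement's English description precedes it below -/
import Mathlib

section
/- Let f : ℝ^D → [0,∞] be measurable and α > 0. Define the scale operator S_α(f)(x) = inf { ρ ∈ (0,∞) : f_ρ(x) > ρ^{-α} } (with inf ∅ = ∞). Then S_α(f) is upper semicontinuous on ℝ^D, and consequently the averaging operator A_α(f) := (S_α(f))^{-α} is lower semicontinuous. -/
open MeasureTheory Metric ENNReal

noncomputable def ballAvg {D : ℕ} (f : EuclideanSpace ℝ (Fin D) → ℝ≥0∞) (ρ : ℝ)
    (x : EuclideanSpace ℝ (Fin D)) : ℝ≥0∞ :=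
  (∫⁻ y in Metric.ball x ρ, f y) / volume (Metric.ball x ρ)

noncomputable def scaleOp {D : ℕ} (α : ℝ) (f : EuclideanSpace ℝ (Fin D) → ℝ≥0∞)
    (x : EuclideanSpace ℝ (Fin D)) : ℝ≥0∞ :=
  sInf {s : ℝ≥0∞ | ∃ ρ : ℝ, 0 < ρ ∧ s = ENNReal.ofReal ρ ∧
    ENNReal.ofReal ρ ^ (-α) < ballAvg f ρ x}

noncomputable def avgOp {D : ℕ} (α : ℝ) (f : EuclideanSpace ℝ (Fin D) → ℝ≥0∞)
    (x : EuclideanSpace ℝ (Fin D)) : ℝ≥0∞ :=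
  scaleOp α f x ^ (-α)

lemma lsc_setLIntegral {D : ℕ} (f : EuclideanSpace ℝ (Fin D) → ℝ≥0∞) {ρ : ℝ} (hρ : 0 < ρ) :
    LowerSemicontinuous fun x : EuclideanSpace ℝ (Fin D) => ∫⁻ y in Metric.ball x ρ, f y := by
  set μ' := volume.withDensity f with hμ'
  have hμ : ∀ (z : EuclideanSpace ℝ (Fin D)) (r : ℝ),
      (∫⁻ y in Metric.ball z r, f y) = μ' (Metric.ball z r) := fun z r =>
    (withDensity_apply f measurableSet_ball).symm
  intro x t ht
  dsimp only at ht ⊢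
  rw [hμ] at ht
  have hU : (⋃ n : ℕ, Metric.ball x (ρ - ρ / (n + 1))) = Metric.ball x ρ := by
    apply Set.Subset.antisymm
    · exact Set.iUnion_subset fun n => ball_subset_ball (by
        have : 0 ≤ ρ / (n + 1) := by positivity
        linarith)
    · intro y hy
      rw [mem_ball] at hy
      obtain ⟨n, hn⟩ := exists_nat_one_div_lt (div_pos (show (0:ℝ) < ρ - dist y x by linarith) hρ)
      refine Set.mem_iUnion.2 ⟨n, ?_⟩
      rw [mem_ball]
      have h1 : ρ / (n + 1) = (1 / (n + 1)) * ρ := by ring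
      have h2 : (1 / ((n : ℝ) + 1)) * ρ < ((ρ - dist y x) / ρ) * ρ := by
        apply mul_lt_mul_of_pos_right hn hρ
      rw [div_mul_cancel₀ _ (ne_of_gt hρ)] at h2
      rw [h1] at *
      linarith
  have hdir : Directed (· ⊆ ·) fun n : ℕ => Metric.ball x (ρ - ρ / (n + 1)) := by
    apply Monotone.directed_le
    intro m n hmn
    apply ball_subset_ball
    have hmn' : ((m : ℝ) + 1) ≤ (n : ℝ) + 1 := by exact_mod_cast Nat.succ_le_succ hmn
    have : ρ / ((n : ℝ) + 1) ≤ ρ / ((m : ℝ) + 1) :=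
      div_le_div_of_nonneg_left hρ.le (by positivity) hmn'
    linarith
  rw [← hU, hdir.measure_iUnion] at ht
  obtain ⟨n, hn⟩ := lt_iSup_iff.1 ht
  have hε : 0 < ρ / (n + 1) := by positivity
  filter_upwards [Metric.ball_mem_nhds x hε] with x' hx'
  rw [hμ]
  refine hn.trans_le (measure_mono ?_)
  intro y hy
  rw [mem_ball] at *
  calc dist y x' ≤ dist y x + dist x x' := dist_triangle _ _ _
    _ < (ρ - ρ / (n + 1)) + ρ / (n + 1) := by
        rw [dist_comm x x']; exact add_lt_add hy hx'
    _ = ρ := by ring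

lemma lsc_ballAvg {D : ℕ} (f : EuclideanSpace ℝ (Fin D) → ℝ≥0∞) {ρ : ℝ} (hρ : 0 < ρ) :
    LowerSemicontinuous (ballAvg f ρ) := by
  have hvol : ∀ x : EuclideanSpace ℝ (Fin D), volume (Metric.ball x ρ)
      = volume (Metric.ball (0 : EuclideanSpace ℝ (Fin D)) ρ) := fun x =>
    Measure.addHaar_ball_center volume x ρ
  set c := volume (Metric.ball (0 : EuclideanSpace ℝ (Fin D)) ρ) with hc
  have hc0 : c ≠ 0 := (measure_ball_pos volume 0 hρ).ne'
  have hct : c ≠ ∞ := measure_ball_lt_top.ne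
  intro x t ht
  unfold ballAvg at ht
  rw [hvol] at ht
  have ht' : t * c < ∫⁻ y in Metric.ball x ρ, f y := ENNReal.mul_lt_of_lt_div ht
  filter_upwards [lsc_setLIntegral f hρ x _ ht'] with x' hx'
  unfold ballAvg
  rw [hvol]
  exact (ENNReal.lt_div_iff_mul_lt (Or.inl hc0) (Or.inl hct)).2 hx'


theorem stmt1 {D : ℕ} (f : EuclideanSpace ℝ (Fin D) → ℝ≥0∞) (hf : Measurable f)
    {α : ℝ} (hα : 0 < α) :
    UpperSemicontinuous (scaleOp α f) ∧ LowerSemicontinuous (avgOp α f) := by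
  have husc : UpperSemicontinuous (scaleOp α f) := by
    intro x t ht
    rw [scaleOp, sInf_lt_iff] at ht
    obtain ⟨s, ⟨ρ, hρ, rfl, hcond⟩, hst⟩ := ht
    filter_upwards [lsc_ballAvg f hρ x _ hcond] with x' hx'
    calc scaleOp α f x' ≤ ENNReal.ofReal ρ := sInf_le ⟨ρ, hρ, rfl, hx'⟩
      _ < t := hst
  refine ⟨husc, ?_⟩
  have hcont : Continuous fun u : ℝ≥0∞ => u ^ (-α) := ENNReal.continuous_rpow_const
  have hanti : Antitone fun u : ℝ≥0∞ => u ^ (-α) := by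
    intro u v huv
    simp only [ENNReal.rpow_neg]
    exact ENNReal.inv_le_inv.2 (ENNReal.rpow_le_rpow huv hα.le)
  exact hcont.comp_upperSemicontinuous_antitone husc hanti
end

section
/- Let f : ℝ^D → [0,∞] be measurable, α > 0, and p ∈ [1,∞). Then S_α(f) ≥ S_{pα}(f^p) pointwise, and consequently A_α(f) ≤ (A_{pα}(f^p))^{1/p} pointwise. -/
open MeasureTheory Metric ENNReal

lemma jensen_ballAvg {D : ℕ} (f : EuclideanSpace ℝ (Fin D) → ℝ≥0∞) (hf : Measurable f)
    {p : ℝ} (hp : 1 ≤ p) {ρ : ℝ} (hρ : 0 < ρ) (x : EuclideanSpace ℝ (Fin D)) :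
    (ballAvg f ρ x) ^ p ≤ ballAvg (fun y => f y ^ p) ρ x := by
  set V : ℝ≥0∞ := volume (Metric.ball x ρ) with hV
  have hV0 : V ≠ 0 := (measure_ball_pos volume x hρ).ne'
  have hVtop : V ≠ ⊤ := measure_ball_lt_top.ne
  rcases eq_or_lt_of_le hp with hp1 | hp1
  · simp [ballAvg, ← hp1]
  set a : ℝ≥0∞ := ∫⁻ y in Metric.ball x ρ, f y with ha
  set b : ℝ≥0∞ := ∫⁻ y in Metric.ball x ρ, f y ^ p with hb
  have hpq : p.HolderConjugate (p / (p - 1)) := Real.HolderConjugate.conjExponent hp1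
  have holder : a ≤ b ^ (1 / p) * V ^ (1 / (p / (p - 1))) := by
    have h := ENNReal.lintegral_mul_le_Lp_mul_Lq (volume.restrict (Metric.ball x ρ)) hpq
      hf.aemeasurable (aemeasurable_const (b := (1 : ℝ≥0∞)))
    simpa [hV] using h
  have key : a ^ p ≤ b * V ^ (p - 1) := by
    calc a ^ p ≤ (b ^ (1 / p) * V ^ (1 / (p / (p - 1)))) ^ p :=
          ENNReal.rpow_le_rpow holder hpq.nonneg
      _ = b * V ^ (p - 1) := by
          rw [ENNReal.mul_rpow_of_nonneg _ _ hpq.nonneg, ← ENNReal.rpow_mul,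
            ← ENNReal.rpow_mul]
          congr 1
          · rw [one_div_mul_cancel hpq.ne_zero, ENNReal.rpow_one]
          · congr 1
            field_simp
  -- now divide
  show (a / V) ^ p ≤ b / V
  rw [ENNReal.div_rpow_of_nonneg _ _ hpq.nonneg]
  have hVp1_ne0 : V ^ (p - 1) ≠ 0 := (ENNReal.rpow_pos (hV0.bot_lt) hVtop).ne'
  have hVp1_netop : V ^ (p - 1) ≠ ⊤ :=
    ENNReal.rpow_ne_top_of_nonneg (by linarith) hVtop
  have hsplit : V ^ p = V ^ (p - 1) * V := by
    have h : V ^ (p - 1) * V ^ (1 : ℝ) = V ^ p := by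
      rw [← ENNReal.rpow_add _ _ hV0 hVtop]; norm_num
    rw [← h, ENNReal.rpow_one]
  calc a ^ p / V ^ p ≤ (b * V ^ (p - 1)) / V ^ p := by gcongr
    _ = (V ^ (p - 1) * b) / (V ^ (p - 1) * V) := by rw [mul_comm b, hsplit]
    _ = b / V := ENNReal.mul_div_mul_left _ _ hVp1_ne0 hVp1_netop


theorem stmt2 {D : ℕ} (f : EuclideanSpace ℝ (Fin D) → ℝ≥0∞) (hf : Measurable f)
    {α p : ℝ} (hα : 0 < α) (hp : 1 ≤ p) :
    (∀ x, scaleOp (p * α) (fun y => f y ^ p) x ≤ scaleOp α f x) ∧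
    (∀ x, avgOp α f x ≤ (avgOp (p * α) (fun y => f y ^ p) x) ^ (1 / p)) := by
  have hp0 : (0 : ℝ) < p := lt_of_lt_of_le one_pos hp
  have hS : ∀ x, scaleOp (p * α) (fun y => f y ^ p) x ≤ scaleOp α f x := by
    intro x
    apply sInf_le_sInf
    rintro s ⟨ρ, hρ, rfl, h⟩
    refine ⟨ρ, hρ, rfl, ?_⟩
    have h1 : (ENNReal.ofReal ρ ^ (-α)) ^ p < (ballAvg f ρ x) ^ p :=
      ENNReal.rpow_lt_rpow h hp0
    have h2 : ENNReal.ofReal ρ ^ (-(p * α)) = (ENNReal.ofReal ρ ^ (-α)) ^ p := by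
      rw [← ENNReal.rpow_mul]; congr 1; ring
    exact h2 ▸ lt_of_lt_of_le h1 (jensen_ballAvg f hf hp hρ x)
  refine ⟨hS, fun x => ?_⟩
  unfold avgOp
  rw [← ENNReal.rpow_mul]
  have he : -(p * α) * (1 / p) = -α := by field_simp
  rw [he]
  -- antitone in base for negative exponent
  rw [ENNReal.rpow_neg, ENNReal.rpow_neg]
  exact ENNReal.inv_le_inv.2 (ENNReal.rpow_le_rpow (hS x) hα.le)
end

section
/- Let f ∈ L^p_loc(ℝ^D) be nonnegative with p ∈ [1,∞) and α > 0. Define the singular set Sing_α(f) = { x ∈ ℝ^D : S_α(f)(x) = 0 }. If 0 < pα < D, then the (D − pα)-dimensional Hausdorff measure of Sing_α(f) is zero. If pα ≥ D, then Sing_α(f) is empty. -/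
/-
At a singular point `x` there are arbitrarily small radii `ρ` with `⨍_{B_ρ(x)} f > ρ^{-α}`, so by
Jensen `ν(B_ρ(x)) > |B_1| ρ^{D - pα}`, where `ν = f^p dx` is finite on compact sets.

If `pα > D` the right-hand side blows up while `ν(B_ρ(x))` stays bounded; if `pα = D > 0` it stays
at `|B_1|` while `ν(B_ρ(x)) → ν{x} = 0`. Either way no point is singular.

If `pα < D`, the density `ν(B_ρ(x)) / |B_ρ(x)| ≥ ρ^{-pα}` is unbounded at singular points, so by
Besicovitch differentiation the singular set is Lebesgue-null, hence `ν`-null. Covering it by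
Vitali-disjoint balls of this kind inside an open set of small `ν`-measure bounds its
`(D - pα)`-dimensional Hausdorff measure by a multiple of `ν(Sing) = 0`.
-/

open MeasureTheory Metric ENNReal

open scoped NNReal
open Measure Filter Topology

theorem Metric.ediam_closedBall_four_mul_le {X : Type*} [PseudoMetricSpace X] (x : X) {r : ℝ}
    (hr : 0 ≤ r) :
    Metric.ediam (closedBall x (4 * r)) ≤ 8 * ENNReal.ofReal r := by
  rw [← closedEBall_ofReal (by positivity)]
  refine ediam_closedEBall_le.trans_eq ?_
  rw [ENNReal.ofReal_mul (by norm_num), ← mul_assoc]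
  norm_num

theorem ENNReal.tendsto_ofReal_rpow_neg_nhdsGT_zero {t : ℝ} (ht : 0 < t) :
    Tendsto (fun ρ : ℝ => ENNReal.ofReal ρ ^ (-t)) (𝓝[>] 0) (𝓝 ∞) := by
  have h₀ : Tendsto ENNReal.ofReal (𝓝[>] 0) (𝓝 0) := by
    simpa using (ENNReal.continuous_ofReal.tendsto 0).mono_left nhdsWithin_le_nhds
  simpa [Function.comp_def, ENNReal.zero_rpow_of_neg (neg_neg_of_pos ht)] using
    ((ENNReal.continuous_rpow_const (y := -t)).tendsto 0).comp h₀

namespace MeasureTheory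

theorem laverage_rpow_le_laverage_rpow {X : Type*} [MeasurableSpace X] {μ : Measure X}
    {f : X → ℝ≥0∞} (hf : AEMeasurable f μ) {p : ℝ} (hp : 1 ≤ p) :
    (⨍⁻ x, f x ∂μ) ^ p ≤ ⨍⁻ x, f x ^ p ∂μ := by
  have hp₀ : 0 < p := zero_lt_one.trans_le hp
  rcases eq_or_ne μ 0 with rfl | hμ₀
  · simp [laverage_zero_measure, ENNReal.zero_rpow_of_pos hp₀]
  rcases eq_or_ne (μ Set.univ) ∞ with hμ | hμ
  · simp [laverage_eq, hμ, ENNReal.zero_rpow_of_pos hp₀]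
  have : IsProbabilityMeasure ((μ Set.univ)⁻¹ • μ) :=
    ⟨by simp [ENNReal.inv_mul_cancel (Measure.measure_univ_ne_zero.2 hμ₀) hμ]⟩
  have key := eLpNorm'_le_eLpNorm'_of_exponent_le zero_lt_one hp ((μ Set.univ)⁻¹ • μ)
    (hf.aestronglyMeasurable.smul_measure _)
  simp only [eLpNorm', enorm_eq_self, ENNReal.rpow_one, div_one] at key
  rw [laverage_eq', laverage_eq']
  calc (∫⁻ x, f x ∂(μ Set.univ)⁻¹ • μ) ^ p
      ≤ ((∫⁻ x, f x ^ p ∂(μ Set.univ)⁻¹ • μ) ^ (1 / p)) ^ p := by gcongr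
    _ = ∫⁻ x, f x ^ p ∂(μ Set.univ)⁻¹ • μ := by
      rw [← ENNReal.rpow_mul, one_div_mul_cancel hp₀.ne', ENNReal.rpow_one]

theorem isFiniteMeasureOnCompacts_withDensity {X : Type*} [MeasurableSpace X]
    [TopologicalSpace X] {μ : Measure X} [SFinite μ] {g : X → ℝ≥0∞}
    (hg : ∀ K, IsCompact K → ∫⁻ x in K, g x ∂μ < ∞) :
    IsFiniteMeasureOnCompacts (μ.withDensity g) :=
  ⟨fun K hK => by rw [withDensity_apply']; exact hg K hK⟩

section Vitali

variable {X : Type*} [MetricSpace X] [SecondCountableTopology X] [MeasurableSpace X]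
  [BorelSpace X] {ν : Measure X} {s : ℝ} {c : ℝ≥0∞} {T U : Set X}

theorem exists_countable_closedBall_cover_of_frequently_lt_measure_ball (hU : IsOpen U)
    (hTU : T ⊆ U) (hT : ∀ x ∈ T, ∃ᶠ r in 𝓝[>] 0, c * ENNReal.ofReal r ^ s < ν (ball x r))
    {δ : ℝ} (hδ : 0 < δ) :
    ∃ u : Set X, u.Countable ∧ ∃ r : X → ℝ, (∀ b ∈ u, 0 ≤ r b ∧ r b ≤ δ) ∧
      T ⊆ ⋃ b ∈ u, closedBall b (4 * r b) ∧ c * ∑' b : u, ENNReal.ofReal (r b) ^ s ≤ ν U := by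
  have hgood : ∀ x ∈ T, ∃ r, (0 < r ∧ r ≤ δ ∧ closedBall x r ⊆ U) ∧
      c * ENNReal.ofReal r ^ s < ν (ball x r) := by
    intro x hx
    obtain ⟨η, hη, hηU⟩ := Metric.isOpen_iff.1 hU x (hTU hx)
    have hsmall : ∀ᶠ r in 𝓝[>] (0 : ℝ), 0 < r ∧ r ≤ δ ∧ closedBall x r ⊆ U := by
      filter_upwards [self_mem_nhdsWithin, Ioo_mem_nhdsGT (lt_min hδ hη)] with r hr hr'
      exact ⟨hr, hr'.2.le.trans (min_le_left _ _),
        (closedBall_subset_ball (hr'.2.trans_le (min_le_right _ _))).trans hηU⟩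
    exact ((hT x hx).and_eventually hsmall).exists.imp fun r h => ⟨h.2, h.1⟩
  choose! r hr hrν using hgood
  obtain ⟨u, huT, hdisj, hcover⟩ := Vitali.exists_disjoint_subfamily_covering_enlargement_closedBall
    T id r δ (fun x hx => (hr x hx).2.1) 4 (by norm_num)
  have hdisj' : u.PairwiseDisjoint fun b => ball b (r b) :=
    hdisj.mono fun _ => ball_subset_closedBall
  have hu : u.Countable := hdisj'.countable_of_isOpen (fun _ _ => isOpen_ball)
    fun b hb => nonempty_ball.2 (hr b (huT hb)).1
  refine ⟨u, hu, r, fun b hb => ⟨(hr b (huT hb)).1.le, (hr b (huT hb)).2.1⟩, ?_, ?_⟩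
  · intro x hx
    obtain ⟨b, hb, hxb⟩ := hcover x hx
    exact Set.mem_biUnion hb (hxb (mem_closedBall_self (hr x hx).1.le))
  · have : Countable u := hu.to_subtype
    calc c * ∑' b : u, ENNReal.ofReal (r b) ^ s
        = ∑' b : u, c * ENNReal.ofReal (r b) ^ s := ENNReal.tsum_mul_left.symm
      _ ≤ ∑' b : u, ν (ball b (r b)) := ENNReal.tsum_le_tsum fun b => (hrν b (huT b.2)).le
      _ = ν (⋃ b ∈ u, ball b (r b)) :=
          (measure_biUnion hu hdisj' fun _ _ => measurableSet_ball).symm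
      _ ≤ ν U := measure_mono <| Set.iUnion₂_subset fun b hb =>
          ball_subset_closedBall.trans (hr b (huT hb)).2.2

theorem hausdorffMeasure_le_of_frequently_lt_measure_ball_of_isOpen (hs : 0 ≤ s) (hc₀ : c ≠ 0)
    (hc : c ≠ ∞) (hU : IsOpen U) (hTU : T ⊆ U)
    (hT : ∀ x ∈ T, ∃ᶠ r in 𝓝[>] 0, c * ENNReal.ofReal r ^ s < ν (ball x r)) :
    μH[s] T ≤ 8 ^ s * (ν U / c) := by
  choose u hu r hr hcover hsum using fun n : ℕ =>
    exists_countable_closedBall_cover_of_frequently_lt_measure_ball hU hTU hT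
      (Nat.one_div_pos_of_nat (n := n))
  have : ∀ n, Countable (u n) := fun n => (hu n).to_subtype
  have hδ : Tendsto (fun n : ℕ => 8 * ENNReal.ofReal (1 / (n + 1))) atTop (𝓝 0) := by
    simpa using ENNReal.Tendsto.const_mul
      (ENNReal.tendsto_ofReal tendsto_one_div_add_atTop_nhds_zero_nat) (Or.inr ofNat_ne_top)
  refine (hausdorffMeasure_le_liminf_tsum s T _ hδ (fun n (b : u n) => closedBall b (4 * r n b))
    (Eventually.of_forall fun n b => ?_) (Eventually.of_forall fun n => ?_)).trans
    (liminf_le_of_frequently_le' (Frequently.of_forall fun n => ?_))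
  · exact (ediam_closedBall_four_mul_le _ (hr n b b.2).1).trans
      (by gcongr; exact (hr n b b.2).2)
  · simpa only [Set.biUnion_eq_iUnion] using hcover n
  · calc ∑' b : u n, Metric.ediam (closedBall (b : X) (4 * r n b)) ^ s
        ≤ ∑' b : u n, (8 * ENNReal.ofReal (r n b)) ^ s := ENNReal.tsum_le_tsum fun b =>
          ENNReal.rpow_le_rpow (ediam_closedBall_four_mul_le _ (hr n b b.2).1) hs
      _ = 8 ^ s * ∑' b : u n, ENNReal.ofReal (r n b) ^ s := by
          simp_rw [ENNReal.mul_rpow_of_nonneg _ _ hs, ENNReal.tsum_mul_left]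
      _ ≤ 8 ^ s * (ν U / c) := by
          gcongr
          rw [ENNReal.le_div_iff_mul_le (Or.inl hc₀) (Or.inl hc), mul_comm]
          exact hsum n

theorem hausdorffMeasure_le_of_frequently_lt_measure_ball [ν.OuterRegular] (hs : 0 ≤ s)
    (hc₀ : c ≠ 0) (hc : c ≠ ∞)
    (hT : ∀ x ∈ T, ∃ᶠ r in 𝓝[>] 0, c * ENNReal.ofReal r ^ s < ν (ball x r)) :
    μH[s] T ≤ 8 ^ s * (ν T / c) := by
  rw [Set.measure_eq_iInf_isOpen T ν]
  simp only [ENNReal.iInf_div_of_ne hc₀ hc,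
    ENNReal.mul_iInf_of_ne (by positivity : (8 : ℝ≥0∞) ^ s ≠ 0)
      (ENNReal.rpow_ne_top_of_nonneg hs ofNat_ne_top)]
  exact le_iInf₂ fun U hTU => le_iInf fun hU =>
    hausdorffMeasure_le_of_frequently_lt_measure_ball_of_isOpen hs hc₀ hc hU hTU hT

end Vitali

section Besicovitch

variable {X : Type*} [MetricSpace X] [SecondCountableTopology X] [HasBesicovitchCovering X]
  [MeasurableSpace X] [BorelSpace X]

theorem measure_eq_zero_of_forall_frequently_lt_measure_closedBall (μ ν : Measure X)
    [IsLocallyFiniteMeasure μ] [IsLocallyFiniteMeasure ν] {T : Set X}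
    (hT : ∀ x ∈ T, ∀ M : ℝ≥0, ∃ᶠ r in 𝓝[>] 0, M * μ (closedBall x r) < ν (closedBall x r)) :
    μ T = 0 := by
  refine measure_mono_null (fun x hx => ?_)
    (ae_iff.1 ((Besicovitch.ae_tendsto_rnDeriv ν μ).and (rnDeriv_lt_top ν μ)))
  rintro ⟨hlim, hfin⟩
  obtain ⟨M, hM, -⟩ := ENNReal.lt_iff_exists_nnreal_btwn.1 hfin
  obtain ⟨r, hMr, hrM⟩ := ((hT x hx M).and_eventually (hlim.eventually (gt_mem_nhds hM))).exists
  have hν : ν (closedBall x r) ≠ 0 := (hMr.trans_le' zero_le).ne'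
  have hμ : μ (closedBall x r) ≠ ∞ := fun h => by
    rw [h, ENNReal.mul_top (zero_le.trans_lt hM).ne'] at hMr
    exact not_top_lt hMr
  exact hrM.not_ge ((ENNReal.le_div_iff_mul_le (Or.inr hν) (Or.inl hμ)).2 hMr.le)

end Besicovitch

end MeasureTheory

section Singular

variable {D : ℕ} {f : EuclideanSpace ℝ (Fin D) → ℝ≥0∞} {p α ρ : ℝ}
  {x : EuclideanSpace ℝ (Fin D)}

theorem frequently_lt_ballAvg_of_scaleOp_eq_zero (hx : scaleOp α f x = 0) :
    ∃ᶠ ρ in 𝓝[>] 0, ENNReal.ofReal ρ ^ (-α) < ballAvg f ρ x := by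
  rw [(nhdsGT_basis 0).frequently_iff]
  intro δ hδ
  obtain ⟨_, ⟨ρ, hρ, rfl, hlt⟩, hρδ⟩ :=
    sInf_lt_iff.1 (hx ▸ ENNReal.ofReal_pos.2 hδ : scaleOp α f x < ENNReal.ofReal δ)
  exact ⟨ρ, ⟨hρ, (ENNReal.ofReal_lt_ofReal_iff hδ).1 hρδ⟩, hlt⟩

theorem rpow_mul_volume_ball_lt_withDensity (hf : Measurable f) (hp : 1 ≤ p)
    (h : ENNReal.ofReal ρ ^ (-α) < ballAvg f ρ x) :
    ENNReal.ofReal ρ ^ (-(p * α)) * volume (ball x ρ)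
      < volume.withDensity (fun y => f y ^ p) (ball x ρ) := by
  rw [ballAvg, ← setLAverage_eq] at h
  have hJensen := (ENNReal.rpow_lt_rpow h (zero_lt_one.trans_le hp)).trans_le
    (laverage_rpow_le_laverage_rpow hf.aemeasurable.restrict hp)
  rw [setLAverage_eq, ← ENNReal.rpow_mul,
    ENNReal.lt_div_iff_mul_lt (Or.inr hJensen.ne_top) (Or.inl measure_ball_lt_top.ne)] at hJensen
  rwa [withDensity_apply _ measurableSet_ball, mul_comm p, ← neg_mul]

theorem rpow_neg_mul_volume_ball (x : EuclideanSpace ℝ (Fin D)) (t : ℝ) (hρ : 0 < ρ) :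
    ENNReal.ofReal ρ ^ (-t) * volume (ball x ρ)
      = volume (ball (0 : EuclideanSpace ℝ (Fin D)) 1) * ENNReal.ofReal ρ ^ ((D : ℝ) - t) := by
  rw [Measure.addHaar_ball_of_pos _ _ hρ, finrank_euclideanSpace_fin, ENNReal.ofReal_pow hρ.le,
    ← ENNReal.rpow_natCast, sub_eq_neg_add,
    ENNReal.rpow_add _ _ (ENNReal.ofReal_pos.2 hρ).ne' ENNReal.ofReal_ne_top]
  ring

theorem frequently_rpow_mul_volume_ball_lt (hf : Measurable f) (hp : 1 ≤ p)
    (hx : scaleOp α f x = 0) :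
    ∃ᶠ ρ in 𝓝[>] 0, ENNReal.ofReal ρ ^ (-(p * α)) * volume (ball x ρ)
      < volume.withDensity (fun y => f y ^ p) (ball x ρ) :=
  (frequently_lt_ballAvg_of_scaleOp_eq_zero hx).mono fun _ h =>
    rpow_mul_volume_ball_lt_withDensity hf hp h

theorem frequently_volume_unitBall_mul_rpow_lt (hf : Measurable f) (hp : 1 ≤ p)
    (hx : scaleOp α f x = 0) :
    ∃ᶠ ρ in 𝓝[>] 0, volume (ball (0 : EuclideanSpace ℝ (Fin D)) 1)
      * ENNReal.ofReal ρ ^ ((D : ℝ) - p * α) < volume.withDensity (fun y => f y ^ p) (ball x ρ) :=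
  (frequently_rpow_mul_volume_ball_lt hf hp hx).mp <| eventually_mem_nhdsWithin.mono
    fun _ hρ h => rpow_neg_mul_volume_ball x (p * α) hρ ▸ h

theorem volume_setOf_scaleOp_eq_zero (hf : Measurable f) (hp : 1 ≤ p) (hα : 0 < α)
    [IsLocallyFiniteMeasure (volume.withDensity fun y => f y ^ p)] :
    volume {x | scaleOp α f x = 0} = 0 := by
  refine measure_eq_zero_of_forall_frequently_lt_measure_closedBall volume
    (volume.withDensity fun y => f y ^ p) fun x hx M => ?_
  have hM : ∀ᶠ ρ in 𝓝[>] 0, (M : ℝ≥0∞) < ENNReal.ofReal ρ ^ (-(p * α)) :=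
    (ENNReal.tendsto_ofReal_rpow_neg_nhdsGT_zero (by positivity)).eventually
      (lt_mem_nhds coe_lt_top)
  refine (frequently_rpow_mul_volume_ball_lt hf hp hx).mp <|
    (hM.and eventually_mem_nhdsWithin).mono fun ρ ⟨hMρ, hρ⟩ h => ?_
  calc M * volume (closedBall x ρ) = M * volume (ball x ρ) := by
        rw [Measure.addHaar_closedBall _ _ hρ.le, Measure.addHaar_ball_of_pos _ _ hρ]
    _ ≤ ENNReal.ofReal ρ ^ (-(p * α)) * volume (ball x ρ) := by gcongr
    _ < _ := h
    _ ≤ _ := measure_mono ball_subset_closedBall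

theorem hausdorffMeasure_setOf_scaleOp_eq_zero (hf : Measurable f) (hp : 1 ≤ p) (hα : 0 < α)
    (hloc : ∀ K, IsCompact K → ∫⁻ y in K, f y ^ p < ⊤) (hpα : p * α < D) :
    μH[D - p * α] {x | scaleOp α f x = 0} = 0 := by
  have := isFiniteMeasureOnCompacts_withDensity hloc
  have hν : volume.withDensity (fun y => f y ^ p) {x | scaleOp α f x = 0} = 0 :=
    withDensity_absolutelyContinuous _ _ (volume_setOf_scaleOp_eq_zero hf hp hα)
  have := hausdorffMeasure_le_of_frequently_lt_measure_ball (T := {x | scaleOp α f x = 0})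
    (sub_nonneg.2 hpα.le)
    (measure_ball_pos volume (0 : EuclideanSpace ℝ (Fin D)) one_pos).ne'
    measure_ball_lt_top.ne fun x hx => frequently_volume_unitBall_mul_rpow_lt hf hp hx
  rwa [hν, ENNReal.zero_div, mul_zero, nonpos_iff_eq_zero] at this

theorem scaleOp_ne_zero_of_lt (hf : Measurable f) (hp : 1 ≤ p)
    [IsFiniteMeasureOnCompacts (volume.withDensity fun y => f y ^ p)] (hpα : (D : ℝ) < p * α) :
    scaleOp α f x ≠ 0 := fun hx => by
  set ν := volume.withDensity fun y => f y ^ p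
  set c := volume (ball (0 : EuclideanSpace ℝ (Fin D)) 1)
  have hblow :
      Tendsto (fun ρ : ℝ => c * ENNReal.ofReal ρ ^ ((D : ℝ) - p * α)) (𝓝[>] 0) (𝓝 ∞) := by
    have := ENNReal.Tendsto.const_mul (a := c)
      (ENNReal.tendsto_ofReal_rpow_neg_nhdsGT_zero (sub_pos.2 hpα)) (Or.inl top_ne_zero)
    rwa [ENNReal.mul_top (measure_ball_pos volume 0 one_pos).ne', neg_sub] at this
  have hbdd : ∀ᶠ ρ in 𝓝[>] (0 : ℝ), ν (ball x ρ) ≤ ν (closedBall x 1) := by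
    filter_upwards [Ioo_mem_nhdsGT one_pos] with ρ hρ
    exact measure_mono (ball_subset_closedBall.trans (closedBall_subset_closedBall hρ.2.le))
  obtain ⟨ρ, hρ, hle, hgt⟩ := ((frequently_volume_unitBall_mul_rpow_lt hf hp hx).and_eventually
    (hbdd.and (hblow.eventually (lt_mem_nhds (measure_closedBall_lt_top (μ := ν)))))).exists
  exact lt_asymm (hρ.trans_le hle) hgt

theorem scaleOp_ne_zero_of_eq (hf : Measurable f) (hp : 1 ≤ p) (hα : 0 < α)
    [IsFiniteMeasureOnCompacts (volume.withDensity fun y => f y ^ p)] (hpα : (D : ℝ) = p * α) :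
    scaleOp α f x ≠ 0 := fun hx => by
  set ν := volume.withDensity fun y => f y ^ p
  have : Nontrivial (EuclideanSpace ℝ (Fin D)) := by
    have : 0 < D := by exact_mod_cast hpα ▸ mul_pos (zero_lt_one.trans_le hp) hα
    exact Module.nontrivial_of_finrank_pos (R := ℝ) (by simpa using this)
  have hshrink : Tendsto (fun ρ => ν (ball x ρ)) (𝓝[>] 0) (𝓝 0) := by
    have := tendsto_measure_biInter_gt (μ := ν) (s := ball x) (a := 0)
      (fun _ _ => measurableSet_ball.nullMeasurableSet) (fun _ _ _ h => ball_subset_ball h)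
      ⟨1, one_pos, measure_ball_lt_top.ne⟩
    rwa [biInter_gt_ball, closedBall_zero,
      withDensity_absolutelyContinuous _ _ (measure_singleton x)] at this
  obtain ⟨ρ, hρ, hsmall⟩ := ((frequently_volume_unitBall_mul_rpow_lt hf hp hx).and_eventually
    (hshrink.eventually (gt_mem_nhds (measure_ball_pos volume (0 : EuclideanSpace ℝ (Fin D))
      one_pos)))).exists
  rw [hpα, sub_self, ENNReal.rpow_zero, mul_one] at hρ
  exact lt_asymm hρ hsmall

theorem setOf_scaleOp_eq_zero_eq_empty (hf : Measurable f) (hp : 1 ≤ p) (hα : 0 < α)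
    (hloc : ∀ K, IsCompact K → ∫⁻ y in K, f y ^ p < ⊤) (hpα : (D : ℝ) ≤ p * α) :
    {x | scaleOp α f x = 0} = ∅ := by
  have := isFiniteMeasureOnCompacts_withDensity hloc
  refine Set.eq_empty_of_forall_notMem fun x => ?_
  rcases hpα.lt_or_eq with hlt | heq
  exacts [scaleOp_ne_zero_of_lt hf hp hlt, scaleOp_ne_zero_of_eq hf hp hα heq]

end Singular

theorem stmt5 {D : ℕ} (f : EuclideanSpace ℝ (Fin D) → ℝ≥0∞) (hf : Measurable f)
    {p α : ℝ} (hp : 1 ≤ p) (hα : 0 < α)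
    (hloc : ∀ K : Set (EuclideanSpace ℝ (Fin D)), IsCompact K → ∫⁻ y in K, f y ^ p < ⊤) :
    (p * α < D →
      MeasureTheory.Measure.hausdorffMeasure ((D : ℝ) - p * α)
        {x : EuclideanSpace ℝ (Fin D) | scaleOp α f x = 0} = 0) ∧
    ((D : ℝ) ≤ p * α → {x : EuclideanSpace ℝ (Fin D) | scaleOp α f x = 0} = ∅) :=
  ⟨hausdorffMeasure_setOf_scaleOp_eq_zero hf hp hα hloc,
    setOf_scaleOp_eq_zero_eq_empty hf hp hα hloc⟩
end

section
/- Let Γ ⊂ ℝ^D be a d-dimensional L-Lipschitz graph and let f ∈ L¹(ℝ^D) be nonnegative. Let α > D − d. Then the function (A_α f)^{1 − (D−d)/α} restricted to Γ lies in weak-L¹ with respect to ℋ^d restricted to Γ, with the estimate ‖(A_α f)^{1−(D−d)/α}‖_{L^{1,∞}(Γ, ℋ^d)} ≤ C(α, D, d, L) ‖f‖_{L¹(ℝ^D)}. -/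
open MeasureTheory Metric ENNReal NNReal

/-! Put β = α - (D - d) > 0. Since A_α f = (S_α f)^{-α}, the function (A_α f)^{1-(D-d)/α} is
(S_α f)^{-β}, whose superlevel set at λ is the sublevel set {S_α f < r} with r = λ^{-1/β}. Every
point x of it has a radius ρ < r with ρ^{D-α} |B_1| < ∫_{B_ρ(x)} f. The Vitali lemma extracts
disjoint balls B_ρ(x) whose 4-fold enlargements cover the level set. As Γ ∩ B(x, R) lies in the
image of a d-dimensional ball of radius R under a (1 + L)-Lipschitz map,
ℋ^d(Γ ∩ B(x, 4ρ)) ≲ ρ^d = ρ^β ρ^{D-α} ≤ r^β ρ^{D-α} ≲ λ⁻¹ ∫_{B_ρ(x)} f, and summing over the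
disjoint balls bounds λ ℋ^d of the superlevel set by a multiple of ∫ f. -/

open Module Set

theorem ENNReal.lt_rpow_neg_iff {a b : ℝ≥0∞} {β : ℝ} (hβ : 0 < β) :
    a < b ^ (-β) ↔ b < a ^ (-β⁻¹) := by
  rw [ENNReal.rpow_neg, ENNReal.lt_inv_iff_lt_inv, ENNReal.rpow_neg, ← ENNReal.inv_rpow,
    ENNReal.lt_rpow_inv_iff hβ]

theorem Vitali.measure_le_mul_of_forall_closedBall_le {X : Type*} [PseudoMetricSpace X]
    [TopologicalSpace.SeparableSpace X] [MeasurableSpace X] [OpensMeasurableSpace X]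
    (ν μ : Measure X) {t : Set X} {r : X → ℝ} {R τ : ℝ} {K : ℝ≥0∞} (hτ : 3 < τ)
    (hr : ∀ x ∈ t, 0 < r x ∧ r x ≤ R)
    (h : ∀ x ∈ t, ν (closedBall x (τ * r x)) ≤ K * μ (ball x (r x))) :
    ν t ≤ K * μ univ := by
  obtain ⟨u, hut, hdisj, hcover⟩ := Vitali.exists_disjoint_subfamily_covering_enlargement_closedBall
    t id r R (fun x hx => (hr x hx).2) τ hτ
  have hu : u.Countable := hdisj.countable_of_nonempty_interior fun x hx =>
    ⟨x, ball_subset_interior_closedBall (mem_ball_self (hr x (hut hx)).1)⟩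
  have hcov : t ⊆ ⋃ x ∈ u, closedBall x (τ * r x) := fun y hy => by
    obtain ⟨x, hxu, hsub⟩ := hcover y hy
    exact mem_biUnion hxu (hsub (mem_closedBall_self (hr y hy).1.le))
  have hballs : Pairwise (Function.onFun Disjoint fun x : u => ball (x : X) (r x)) :=
    fun x y hxy => (hdisj x.2 y.2 (Subtype.coe_injective.ne hxy)).mono
      ball_subset_closedBall ball_subset_closedBall
  have := hu.to_subtype
  calc ν t ≤ ∑' x : u, ν (closedBall x (τ * r x)) :=
        (measure_mono hcov).trans (measure_biUnion_le _ hu _)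
    _ ≤ ∑' x : u, K * μ (ball x (r x)) := ENNReal.tsum_le_tsum fun x => h x (hut x.2)
    _ = K * μ (⋃ x : u, ball x (r x)) := by
        rw [ENNReal.tsum_mul_left, measure_iUnion hballs fun _ => measurableSet_ball]
    _ ≤ K * μ univ := by gcongr; exact subset_univ _

theorem hausdorffMeasure_inter_closedBall_le_of_section {X Y : Type*} [MetricSpace X]
    [MetricSpace Y] [MeasurableSpace X] [BorelSpace X] [MeasurableSpace Y] [BorelSpace Y]
    {Γ : Set X} {U : Set Y} {p : X → Y} {h : Y → X} {K : ℝ≥0}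
    (hp : LipschitzWith 1 p) (hh : LipschitzOnWith K h U) (hΓ : ∀ x ∈ Γ, p x ∈ U ∧ h (p x) = x)
    {s : ℝ} (hs : 0 ≤ s) (z : X) (R : ℝ) :
    μH[s] (Γ ∩ closedBall z R) ≤ K ^ s * μH[s] (closedBall (p z) R) := by
  have hsub : Γ ∩ closedBall z R ⊆ h '' (U ∩ closedBall (p z) R) := by
    rintro x ⟨hxΓ, hxz⟩
    refine ⟨p x, ⟨(hΓ x hxΓ).1, ?_⟩, (hΓ x hxΓ).2⟩
    simpa using (hp.dist_le_mul x z).trans (by simpa using hxz)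
  calc μH[s] (Γ ∩ closedBall z R) ≤ μH[s] (h '' (U ∩ closedBall (p z) R)) := measure_mono hsub
    _ ≤ K ^ s * μH[s] (U ∩ closedBall (p z) R) :=
        (hh.mono inter_subset_left).hausdorffMeasure_image_le hs
    _ ≤ K ^ s * μH[s] (closedBall (p z) R) := by gcongr; exact inter_subset_right

theorem LipschitzOnWith.toLp_graph {E F : Type*} [SeminormedAddCommGroup E]
    [SeminormedAddCommGroup F] {U : Set E} {g : E → F} {L : ℝ≥0}
    (hg : LipschitzOnWith L g U) :
    LipschitzOnWith (1 + L) (fun u => WithLp.toLp 2 (u, g u)) U := by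
  refine LipschitzOnWith.of_dist_le_mul fun u hu u' hu' => ?_
  have hgu := hg.dist_le_mul u hu u' hu'
  calc dist (WithLp.toLp 2 (u, g u)) (WithLp.toLp 2 (u', g u'))
      = √(dist u u' ^ 2 + dist (g u) (g u') ^ 2) := WithLp.prod_dist_eq_of_L2 _ _
    _ ≤ dist u u' + dist (g u) (g u') :=
        Real.sqrt_le_iff.2 ⟨by positivity,
          by nlinarith [@dist_nonneg _ _ u u', @dist_nonneg _ _ (g u) (g u')]⟩
    _ ≤ ↑(1 + L) * dist u u' := by push_cast; linarith

section LipschitzGraph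

variable {E F X : Type*} [NormedAddCommGroup E] [NormedSpace ℝ E]
  [NormedAddCommGroup F] [NormedSpace ℝ F] [NormedAddCommGroup X] [NormedSpace ℝ X]

def graphOn (e : X ≃ₗᵢ[ℝ] WithLp 2 (E × F)) (U : Set E) (g : E → F) : Set X :=
  {x | (WithLp.equiv 2 (E × F) (e x)).1 ∈ U ∧
    (WithLp.equiv 2 (E × F) (e x)).2 = g (WithLp.equiv 2 (E × F) (e x)).1}

theorem hausdorffMeasure_graphOn_inter_closedBall_le [FiniteDimensional ℝ E] [MeasurableSpace E]
    [BorelSpace E] [MeasurableSpace X] [BorelSpace X] (e : X ≃ₗᵢ[ℝ] WithLp 2 (E × F))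
    {U : Set E} {g : E → F} {L : ℝ≥0} (hg : LipschitzOnWith L g U) (z : X) {R : ℝ} (hR : 0 ≤ R) :
    μH[finrank ℝ E] (graphOn e U g ∩ closedBall z R) ≤
      ((1 + L : ℝ≥0) : ℝ≥0∞) ^ (finrank ℝ E : ℝ) * μH[finrank ℝ E] (closedBall (0 : E) 1) *
        ENNReal.ofReal R ^ (finrank ℝ E : ℝ) := by
  have hp : LipschitzWith 1 fun x => (WithLp.equiv 2 (E × F) (e x)).1 :=
    LipschitzWith.of_dist_le_mul fun x y => by
      simpa [e.dist_map] using WithLp.dist_fst_le (e x) (e y)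
  have hh : LipschitzOnWith (1 + L) (fun u => e.symm (WithLp.toLp 2 (u, g u))) U :=
    one_mul (1 + L) ▸ e.symm.lipschitz.comp_lipschitzOnWith hg.toLp_graph
  calc μH[finrank ℝ E] (graphOn e U g ∩ closedBall z R)
      ≤ ((1 + L : ℝ≥0) : ℝ≥0∞) ^ (finrank ℝ E : ℝ) *
          μH[finrank ℝ E] (closedBall (WithLp.equiv 2 (E × F) (e z)).1 R) :=
        hausdorffMeasure_inter_closedBall_le_of_section hp hh
          (fun x hx => ⟨hx.1, by rw [← hx.2]; exact e.symm_apply_apply x⟩) (Nat.cast_nonneg _) z R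
    _ = _ := by
        rw [Measure.addHaar_closedBall' _ _ hR, ENNReal.ofReal_pow hR, ← ENNReal.rpow_natCast]
        ring

end LipschitzGraph

section MaximalFunction

variable {D : ℕ} {α : ℝ} {f : EuclideanSpace ℝ (Fin D) → ℝ≥0∞}

theorem avgOp_rpow_one_sub_div (hα : α ≠ 0) (t : ℝ) (x : EuclideanSpace ℝ (Fin D)) :
    avgOp α f x ^ (1 - t / α) = scaleOp α f x ^ (t - α) := by
  rw [avgOp, ← ENNReal.rpow_mul]
  congr 1
  field_simp
  ring

theorem exists_rpow_mul_volume_lt_of_scaleOp_lt {x : EuclideanSpace ℝ (Fin D)} {r : ℝ≥0∞}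
    (h : scaleOp α f x < r) :
    ∃ ρ : ℝ, 0 < ρ ∧ ENNReal.ofReal ρ < r ∧
      ENNReal.ofReal ρ ^ ((D : ℝ) - α) * volume (ball (0 : EuclideanSpace ℝ (Fin D)) 1) <
        ∫⁻ y in ball x ρ, f y := by
  obtain ⟨_, ⟨ρ, hρ, rfl, hlt⟩, hρr⟩ := sInf_lt_iff.mp h
  refine ⟨ρ, hρ, hρr, ?_⟩
  have hvol : volume (ball x ρ) =
      ENNReal.ofReal ρ ^ (D : ℝ) * volume (ball (0 : EuclideanSpace ℝ (Fin D)) 1) := by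
    rw [Measure.addHaar_ball_of_pos _ _ hρ, finrank_euclideanSpace_fin, ENNReal.ofReal_pow hρ.le,
      ENNReal.rpow_natCast]
  rwa [ballAvg, ENNReal.lt_div_iff_mul_lt (Or.inl (measure_ball_pos _ _ hρ).ne')
    (Or.inl measure_ball_lt_top.ne), hvol, ← mul_assoc,
    ← ENNReal.rpow_add _ _ (ENNReal.ofReal_pos.2 hρ).ne' ENNReal.ofReal_ne_top,
    neg_add_eq_sub] at hlt

variable (ν : Measure (EuclideanSpace ℝ (Fin D))) {Γ : Set (EuclideanSpace ℝ (Fin D))}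
  {c : ℝ≥0∞} {s : ℝ}

theorem measure_inter_setOf_scaleOp_lt_le
    (hΓ : ∀ z ∈ Γ, ∀ R, 0 ≤ R → ν (Γ ∩ closedBall z R) ≤ c * ENNReal.ofReal R ^ s)
    (hsα : (D : ℝ) - s ≤ α) {r : ℝ≥0∞} (hr : r ≠ ⊤) :
    ν (Γ ∩ {x | scaleOp α f x < r}) ≤
      c * 4 ^ s * (volume (ball (0 : EuclideanSpace ℝ (Fin D)) 1))⁻¹ * r ^ (α - (D - s)) *
        ∫⁻ y, f y := by
  set v := volume (ball (0 : EuclideanSpace ℝ (Fin D)) 1)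
  choose! ρ hρ using fun x (hx : x ∈ Γ ∩ {x | scaleOp α f x < r}) =>
    exists_rpow_mul_volume_lt_of_scaleOp_lt hx.2
  rw [← Measure.restrict_eq_self ν inter_subset_left, ← setLIntegral_univ,
    ← withDensity_apply _ MeasurableSet.univ]
  refine Vitali.measure_le_mul_of_forall_closedBall_le _ _ (τ := 4) (R := r.toReal) (by norm_num)
    (fun x hx => ⟨(hρ x hx).1, ((ENNReal.ofReal_lt_iff_lt_toReal (hρ x hx).1.le hr).1
      (hρ x hx).2.1).le⟩) fun x hx => ?_
  obtain ⟨hρ₀, hρr, hρf⟩ := hρ x hx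
  rw [Measure.restrict_apply measurableSet_closedBall, inter_comm,
    withDensity_apply _ measurableSet_ball]
  calc ν (Γ ∩ closedBall x (4 * ρ x)) ≤ c * ENNReal.ofReal (4 * ρ x) ^ s :=
        hΓ x hx.1 _ (by positivity)
    _ = c * 4 ^ s * ENNReal.ofReal (ρ x) ^ (α - (D - s) + (D - α)) := by
        rw [ENNReal.ofReal_mul (by norm_num), ENNReal.ofReal_ofNat,
          ENNReal.mul_rpow_of_ne_top (by norm_num) ENNReal.ofReal_ne_top, mul_assoc]
        ring_nf
    _ = c * 4 ^ s *
          (ENNReal.ofReal (ρ x) ^ (α - (D - s)) * ENNReal.ofReal (ρ x) ^ ((D : ℝ) - α)) := by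
        rw [ENNReal.rpow_add _ _ (ENNReal.ofReal_pos.2 hρ₀).ne' ENNReal.ofReal_ne_top]
    _ ≤ c * 4 ^ s * (r ^ (α - (D - s)) * ((∫⁻ y in ball x (ρ x), f y) / v)) := by
        gcongr c * 4 ^ s * (?_ * ?_)
        · exact ENNReal.rpow_le_rpow hρr.le (by linarith)
        · exact ENNReal.le_div_iff_mul_le (Or.inl (measure_ball_pos _ _ one_pos).ne')
            (Or.inl measure_ball_lt_top.ne) |>.2 hρf.le
    _ = c * 4 ^ s * v⁻¹ * r ^ (α - (D - s)) * ∫⁻ y in ball x (ρ x), f y := by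
        rw [div_eq_mul_inv]; ring

theorem ofReal_mul_measure_inter_setOf_lt_avgOp_rpow_le
    (hΓ : ∀ z ∈ Γ, ∀ R, 0 ≤ R → ν (Γ ∩ closedBall z R) ≤ c * ENNReal.ofReal R ^ s)
    (hα : α ≠ 0) (hsα : (D : ℝ) - s < α) {lam : ℝ} (hlam : 0 < lam) :
    ENNReal.ofReal lam * ν (Γ ∩ {x | ENNReal.ofReal lam < avgOp α f x ^ (1 - (D - s) / α)}) ≤
      c * 4 ^ s * (volume (ball (0 : EuclideanSpace ℝ (Fin D)) 1))⁻¹ * ∫⁻ y, f y := by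
  have hβ : 0 < α - (D - s) := sub_pos.2 hsα
  have hlam : ENNReal.ofReal lam ≠ 0 := (ENNReal.ofReal_pos.2 hlam).ne'
  have hlevel : Γ ∩ {x | ENNReal.ofReal lam < avgOp α f x ^ (1 - (D - s) / α)} ⊆
      Γ ∩ {x | scaleOp α f x < ENNReal.ofReal lam ^ (-(α - (D - s))⁻¹)} := by
    rintro x ⟨hx, hlt : ENNReal.ofReal lam < _⟩
    refine ⟨hx, ?_⟩
    rwa [avgOp_rpow_one_sub_div hα, ← neg_sub, ENNReal.lt_rpow_neg_iff hβ] at hlt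
  set K := c * 4 ^ s * (volume (ball (0 : EuclideanSpace ℝ (Fin D)) 1))⁻¹
  calc ENNReal.ofReal lam * ν (Γ ∩ {x | ENNReal.ofReal lam < avgOp α f x ^ (1 - (D - s) / α)})
      ≤ ENNReal.ofReal lam *
          (K * (ENNReal.ofReal lam ^ (-(α - (D - s))⁻¹)) ^ (α - (D - s)) * ∫⁻ y, f y) := by
        gcongr
        exact (measure_mono hlevel).trans (measure_inter_setOf_scaleOp_lt_le ν hΓ hsα.le
          (ENNReal.rpow_ne_top_of_ne_zero hlam ENNReal.ofReal_ne_top))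
    _ = K * (ENNReal.ofReal lam * (ENNReal.ofReal lam)⁻¹) * ∫⁻ y, f y := by
        rw [← ENNReal.rpow_mul, neg_mul, inv_mul_cancel₀ hβ.ne', ENNReal.rpow_neg_one]
        ring
    _ = K * ∫⁻ y, f y := by rw [ENNReal.mul_inv_cancel hlam ENNReal.ofReal_ne_top, mul_one]

end MaximalFunction

theorem stmt7 (D d m : ℕ) (hD : D = d + m) (L : ℝ≥0) {α : ℝ} (hα : (D : ℝ) - d < α) :
    ∃ C : ℝ≥0∞, 0 < C ∧ C < ⊤ ∧
      ∀ (e : EuclideanSpace ℝ (Fin D) ≃ₗᵢ[ℝ]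
          WithLp 2 (EuclideanSpace ℝ (Fin d) × EuclideanSpace ℝ (Fin m)))
        (U : Set (EuclideanSpace ℝ (Fin d)))
        (g : EuclideanSpace ℝ (Fin d) → EuclideanSpace ℝ (Fin m)),
        LipschitzOnWith L g U →
        ∀ f : EuclideanSpace ℝ (Fin D) → ℝ≥0∞, Measurable f →
        (∫⁻ y, f y) < ⊤ →
        ∀ lam : ℝ, 0 < lam →
        ENNReal.ofReal lam *
          MeasureTheory.Measure.hausdorffMeasure (d : ℝ)
            {x : EuclideanSpace ℝ (Fin D) |
              ((WithLp.equiv 2 (EuclideanSpace ℝ (Fin d) × EuclideanSpace ℝ (Fin m)) (e x)).1 ∈ U ∧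
               (WithLp.equiv 2 (EuclideanSpace ℝ (Fin d) × EuclideanSpace ℝ (Fin m)) (e x)).2 =
                 g (WithLp.equiv 2 (EuclideanSpace ℝ (Fin d) × EuclideanSpace ℝ (Fin m)) (e x)).1) ∧
              ENNReal.ofReal lam < (avgOp α f x) ^ (1 - ((D : ℝ) - d) / α)}
          ≤ C * ∫⁻ y, f y := by
  have hα₀ : α ≠ 0 := by
    have : (0 : ℝ) ≤ D - d := by rw [hD]; push_cast; linarith
    exact (this.trans_lt hα).ne'
  have : (μH[d] : Measure (EuclideanSpace ℝ (Fin d))).IsAddHaarMeasure := by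
    simpa using isAddHaarMeasure_hausdorffMeasure (E := EuclideanSpace ℝ (Fin d))
  refine ⟨((1 + L : ℝ≥0) : ℝ≥0∞) ^ (d : ℝ) * μH[d] (closedBall (0 : EuclideanSpace ℝ (Fin d)) 1) *
    4 ^ (d : ℝ) * (volume (ball (0 : EuclideanSpace ℝ (Fin D)) 1))⁻¹, ?_, ?_,
    fun e U g hg f _ _ lam hlam => ?_⟩
  · exact ENNReal.mul_pos (mul_ne_zero (mul_ne_zero (by positivity)
      (measure_closedBall_pos _ _ one_pos).ne') (by positivity))
      (ENNReal.inv_ne_zero.2 measure_ball_lt_top.ne)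
  · exact ENNReal.mul_lt_top (ENNReal.mul_lt_top (ENNReal.mul_lt_top (by finiteness)
      measure_closedBall_lt_top) (by finiteness)) (ENNReal.inv_lt_top.2 (measure_ball_pos _ _ one_pos))
  refine ofReal_mul_measure_inter_setOf_lt_avgOp_rpow_le _ (Γ := graphOn e U g)
    (fun z _ R hR => ?_) hα₀ hα hlam
  simpa using hausdorffMeasure_graphOn_inter_closedBall_le e hg z hR
end

section
/- For every ε > 0 there exists a measurable function u : (0,1) × (0,1) → [0,∞) (namely u(t,x) = e^{t/ε} · 1_{[0, e^{−t/ε}]}(x)) such that ‖u(t,·)‖_{L^{1,∞}((0,1))} = 1 for every t ∈ (0,1), hence ‖u‖_{L^{1,∞}_t L^{1,∞}_x} = 1, while the joint weak norm satisfies ‖u‖_{L^{1,∞}((0,1)×(0,1))} ≤ ε. -/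
/-!
For each slice `t`, `u(t, ·)` is a spike of height `h = e^{t/ε}` on a set of measure `1/h`, so
its weak-`L¹` norm is exactly `h · (1/h) = 1`. Jointly, however, the superlevel set `{u > λ}` only
contains points with `e^{t/ε} > max 1 λ`, i.e. `t > ε log (max 1 λ)`, and the area under
`t ↦ e^{-t/ε}` beyond that point is `ε / max 1 λ`; hence `λ · |{u > λ}| ≤ ε`.
-/

open MeasureTheory ENNReal Set

section WeakL1

variable {α : Type*} [MeasurableSpace α] (μ : Measure α)

noncomputable def weakL1NormOn (s : Set α) (f : α → ℝ≥0∞) : ℝ≥0∞ :=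
  ⨆ (l : ℝ) (_ : 0 < l), ENNReal.ofReal l * μ {x | x ∈ s ∧ ENNReal.ofReal l < f x}

theorem iSup_ofReal_ite_lt_eq (c : ℝ≥0∞) :
    ⨆ (l : ℝ) (_ : 0 < l), (if ENNReal.ofReal l < c then ENNReal.ofReal l else 0) = c := by
  refine le_antisymm (iSup₂_le fun l _ => ?_) (le_of_forall_lt fun d hd => ?_)
  · split_ifs with h
    exacts [h.le, zero_le]
  · obtain ⟨r, -, hdr, hrc⟩ := ENNReal.lt_iff_exists_real_btwn.1 hd
    have hr : 0 < r := ENNReal.ofReal_pos.1 (zero_le.trans_lt hdr)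
    exact hdr.trans_le (le_iSup₂_of_le r hr (by rw [if_pos hrc]))

theorem weakL1NormOn_congr {s : Set α} {f g : α → ℝ≥0∞} (h : EqOn f g s) :
    weakL1NormOn μ s f = weakL1NormOn μ s g := by
  refine iSup_congr fun l => iSup_congr fun _ => ?_
  congr 2
  exact Set.ext fun x => and_congr_right fun hx => by rw [h hx]

theorem weakL1NormOn_indicator_const (s A : Set α) (c : ℝ≥0∞) :
    weakL1NormOn μ s (A.indicator fun _ => c) = c * μ (s ∩ A) := by
  have hlevel : ∀ l : ℝ, {x | x ∈ s ∧ ENNReal.ofReal l < A.indicator (fun _ => c) x}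
      = if ENNReal.ofReal l < c then s ∩ A else ∅ := by
    intro l
    ext x
    by_cases hx : x ∈ A <;> split_ifs <;> simp_all
  calc weakL1NormOn μ s (A.indicator fun _ => c)
      = ⨆ (l : ℝ) (_ : 0 < l),
          (if ENNReal.ofReal l < c then ENNReal.ofReal l else 0) * μ (s ∩ A) := by
        refine iSup_congr fun l => iSup_congr fun _ => ?_
        rw [hlevel]
        split_ifs <;> simp
    _ = c * μ (s ∩ A) := by
        simp only [← ENNReal.iSup_mul, iSup_ofReal_ite_lt_eq]

theorem weakL1NormOn_const (s : Set α) (c : ℝ≥0∞) :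
    weakL1NormOn μ s (fun _ => c) = c * μ s := by
  simpa using weakL1NormOn_indicator_const μ s univ c

end WeakL1

theorem volume_region_between_oc_eq_lintegral {α : Type*} [MeasurableSpace α] {μ : Measure α}
    {f g : α → ℝ} {s : Set α} (hf : Measurable f) (hg : Measurable g) (hs : MeasurableSet s) :
    μ.prod volume {p : α × ℝ | p.1 ∈ s ∧ p.2 ∈ Ioc (f p.1) (g p.1)}
      = ∫⁻ y in s, ENNReal.ofReal (g y - f y) ∂μ := by
  rw [Measure.prod_apply (measurableSet_region_between_oc hf hg hs), ← lintegral_indicator hs]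
  congr 1 with x
  by_cases hx : x ∈ s
  · simp only [indicator_of_mem hx, preimage_ofPred_eq, hx, true_and]
    exact Real.volume_Ioc
  · simp [hx]

theorem volume_Ioo_inter_Icc_of_le {a b r : ℝ} (hr : r ≤ b) :
    volume (Ioo a b ∩ Icc a r) = ENNReal.ofReal (r - a) := by
  refine le_antisymm ((measure_mono inter_subset_right).trans_eq Real.volume_Icc) ?_
  calc ENNReal.ofReal (r - a) = volume (Ioo a r) := Real.volume_Ioo.symm
    _ ≤ volume (Ioo a b ∩ Icc a r) :=
        measure_mono fun x hx => ⟨⟨hx.1, hx.2.trans_le hr⟩, Ioo_subset_Icc_self hx⟩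

section Spike

open Real

variable {ε : ℝ}

noncomputable def spike (ε t : ℝ) : ℝ → ℝ≥0∞ :=
  (Icc 0 (exp (-(t / ε)))).indicator fun _ => ENNReal.ofReal (exp (t / ε))

theorem ofReal_lt_spike_iff {l t x : ℝ} :
    ENNReal.ofReal l < spike ε t x ↔ x ∈ Icc 0 (exp (-(t / ε))) ∧ l < exp (t / ε) := by
  by_cases hx : x ∈ Icc 0 (exp (-(t / ε)))
  · simp [spike, hx, ENNReal.ofReal_lt_ofReal_iff (exp_pos _)]
  · simp [spike, hx]

theorem measurable_uncurry_spike (ε : ℝ) : Measurable (Function.uncurry (spike ε)) := by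
  have hbase : MeasurableSet {p : ℝ × ℝ | p.2 ∈ Icc 0 (exp (-(p.1 / ε)))} :=
    (measurableSet_le measurable_const measurable_snd).inter
      (measurableSet_le measurable_snd (by fun_prop))
  exact Measurable.indicator (by fun_prop) hbase

theorem weakL1NormOn_spike (hε : 0 < ε) {t : ℝ} (ht : 0 ≤ t) :
    weakL1NormOn volume (Ioo 0 1) (spike ε t) = 1 := by
  have hwidth : exp (-(t / ε)) ≤ 1 := exp_le_one_iff.2 (neg_nonpos.2 (div_nonneg ht hε.le))
  rw [spike, weakL1NormOn_indicator_const, volume_Ioo_inter_Icc_of_le hwidth, sub_zero,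
    ← ENNReal.ofReal_mul (exp_pos _).le, ← exp_add, add_neg_cancel, exp_zero, ENNReal.ofReal_one]

theorem volume_region_under_exp_neg_div (hε : 0 < ε) (a : ℝ) :
    volume {p : ℝ × ℝ | p.1 ∈ Ioi a ∧ p.2 ∈ Ioc 0 (exp (-(p.1 / ε)))}
      = ENNReal.ofReal (ε * exp (-(a / ε))) := by
  have hexp : (fun t => exp (-(t / ε))) = fun t => exp (-ε⁻¹ * t) := by
    ext t
    ring_nf
  have hint : IntegrableOn (fun t => exp (-(t / ε))) (Ioi a) := by
    rw [hexp]
    exact integrableOn_exp_mul_Ioi (by simpa using hε) a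
  have hlayer := volume_region_between_oc_eq_lintegral (μ := volume) (f := fun _ => 0)
    (g := fun t => exp (-(t / ε))) measurable_const (by fun_prop) (measurableSet_Ioi (a := a))
  simp only [sub_zero] at hlayer
  rw [Measure.volume_eq_prod, hlayer,
    ← ofReal_integral_eq_lintegral_ofReal hint (Filter.Eventually.of_forall fun _ => (exp_pos _).le),
    hexp, integral_exp_mul_Ioi (by simpa using hε)]
  congr 1
  field_simp

theorem weakL1NormOn_uncurry_spike_le (hε : 0 < ε) :
    weakL1NormOn volume (Ioo 0 1 ×ˢ Ioo 0 1) (Function.uncurry (spike ε)) ≤ ENNReal.ofReal ε := by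
  refine iSup₂_le fun l hl => ?_
  set m := max 1 l
  have hm : 0 < m := one_pos.trans_le (le_max_left _ _)
  have hsub : {z | z ∈ Ioo 0 1 ×ˢ Ioo 0 1 ∧ ENNReal.ofReal l < Function.uncurry (spike ε) z}
      ⊆ {p : ℝ × ℝ | p.1 ∈ Ioi (ε * log m) ∧ p.2 ∈ Ioc 0 (exp (-(p.1 / ε)))} := by
    rintro ⟨t, x⟩ ⟨⟨⟨ht, -⟩, hx, -⟩, hlt⟩
    obtain ⟨⟨-, hxr⟩, hlh⟩ := ofReal_lt_spike_iff.1 hlt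
    have hmh : m < exp (t / ε) := max_lt (one_lt_exp_iff.2 (div_pos ht hε)) hlh
    refine ⟨?_, hx, hxr⟩
    rw [mem_Ioi, ← lt_div_iff₀' hε]
    exact (log_lt_iff_lt_exp hm).2 hmh
  calc ENNReal.ofReal l * volume {z | z ∈ Ioo 0 1 ×ˢ Ioo 0 1 ∧
        ENNReal.ofReal l < Function.uncurry (spike ε) z}
      ≤ ENNReal.ofReal l * ENNReal.ofReal (ε * exp (-(ε * log m / ε))) := by
        grw [hsub, volume_region_under_exp_neg_div hε]
    _ = ENNReal.ofReal (l / m * ε) := by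
        rw [← ENNReal.ofReal_mul hl.le, mul_div_cancel_left₀ _ hε.ne', exp_neg, exp_log hm]
        ring_nf
    _ ≤ ENNReal.ofReal ε := by
        gcongr
        exact mul_le_of_le_one_left hε.le ((div_le_one hm).2 (le_max_right _ _))

end Spike

theorem stmt13 (ε : ℝ) (hε : 0 < ε) :
    ∃ u : ℝ → ℝ → ℝ≥0∞,
      u = (fun t x => (Set.Icc (0 : ℝ) (Real.exp (-(t / ε)))).indicator
            (fun _ => ENNReal.ofReal (Real.exp (t / ε))) x) ∧
      Measurable (Function.uncurry u) ∧
      (∀ t ∈ Set.Ioo (0 : ℝ) 1,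
        (⨆ (l : ℝ) (_ : 0 < l), ENNReal.ofReal l *
          volume {x ∈ Set.Ioo (0 : ℝ) 1 | ENNReal.ofReal l < u t x}) = 1) ∧
      (⨆ (b : ℝ) (_ : 0 < b), ENNReal.ofReal b *
        volume {t ∈ Set.Ioo (0 : ℝ) 1 |
          ENNReal.ofReal b <
            ⨆ (l : ℝ) (_ : 0 < l), ENNReal.ofReal l *
              volume {x ∈ Set.Ioo (0 : ℝ) 1 | ENNReal.ofReal l < u t x}}) = 1 ∧
      (⨆ (l : ℝ) (_ : 0 < l), ENNReal.ofReal l *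
        volume {z : ℝ × ℝ | z ∈ Set.Ioo (0 : ℝ) 1 ×ˢ Set.Ioo (0 : ℝ) 1 ∧
          ENNReal.ofReal l < u z.1 z.2}) ≤ ENNReal.ofReal ε := by
  have hslice : ∀ t ∈ Ioo (0 : ℝ) 1, weakL1NormOn volume (Ioo 0 1) (spike ε t) = 1 :=
    fun t ht => weakL1NormOn_spike hε ht.1.le
  refine ⟨spike ε, rfl, measurable_uncurry_spike ε, hslice, ?_,
    weakL1NormOn_uncurry_spike_le hε⟩
  change weakL1NormOn volume (Ioo 0 1) (fun t => weakL1NormOn volume (Ioo 0 1) (spike ε t)) = 1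
  rw [weakL1NormOn_congr volume hslice, weakL1NormOn_const, Real.volume_Ioo, sub_zero,
    ENNReal.ofReal_one, one_mul]
end
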